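/- arXiv:2503.05062 — 8 statements merged into one kernel-verified Lean document; each statement's English description precedes it below -/
import Mathlib

section
/- Let F_q be a finite field, let L ∈ F_q[X] be monic of degree m ≥ 1, and let b_1,…,b_{n_s} ∈ F_q be pairwise distinct such that each fiber P[j] = {a ∈ F_q : L(a) = b_j} has exactly m elements. Set n = m·n_s and enumerate the evaluation points a_1,…,a_n fiber by fiber, i.e. {a_{(j−1)m+1},…,a_{jm}} = P[j] for each j. Let 1 ≤ k ≤ n and let RS[n,k] = {(f(a_1),…,f(a_n)) : f ∈ F_q[X], deg f < k}. Then for every r ∈ F_q^n and every integer ℓ with 0 ≤ ℓ ≤ n − k − 2m, the number of codewords c ∈ RS[n,k] such that r − c is an ℓ-burst is at most ⌊(k−1)/m⌋ + 2. (In particular, choosing n_s = ⌈2/ε⌉ this says RS[n,k] is (1 − k/n − ε, O(1/ε))-burst list-decodable, which is the combinatorial content of the paper's Main Theorem 1 / Theorem 4.2.) -/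
/-!
Let `s(c)` be the first position where the error `r - c` is nonzero. A codeword in the list agrees
with `r` outside the window `[s(c), s(c) + ℓ)`, so its block index `s(c) / m` determines it: two
codewords with the same block index agree with `r` outside a window of `m + ℓ - 1` positions,
hence on at least `k` positions. Two distinct codewords agree with each other before
`min (s(c₁), s(c₂))`, which is therefore `< k`; so at most one block index exceeds `(k - 1) / m`.
-/

open Polynomial

open Finset in
theorem Fin.card_filter_val_lt_or_add_le {n : ℕ} (A w : ℕ) :
    n - w ≤ #{q : Fin n | (q : ℕ) < A ∨ A + w ≤ q} := by
  have hwindow : #{q : Fin n | ¬((q : ℕ) < A ∨ A + w ≤ q)} ≤ w := calc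
    _ = #(({q : Fin n | ¬((q : ℕ) < A ∨ A + w ≤ q)} : Finset (Fin n)).map Fin.valEmbedding) :=
      (card_map _).symm
    _ ≤ #(Ico A (A + w)) := card_le_card fun x hx => by
      simp only [mem_map, mem_filter, mem_univ, true_and, Fin.valEmbedding_apply] at hx
      obtain ⟨q, hq, rfl⟩ := hx
      simp only [mem_Ico]
      omega
    _ = w := by simp
  have := card_filter_add_card_filter_not (s := (univ : Finset (Fin n)))
    (fun q : Fin n => (q : ℕ) < A ∨ A + w ≤ q)
  rw [card_univ, Fintype.card_fin] at this
  omega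

theorem Set.ncard_le_add_two_of_min_le {α : Type*} {S : Set α} (u : α → ℕ) (K : ℕ)
    (hu : S.InjOn u) (hmin : ∀ x ∈ S, ∀ y ∈ S, x ≠ y → min (u x) (u y) ≤ K) :
    S.ncard ≤ K + 2 := by
  have hhigh : (u '' S ∩ Set.Ioi K).Subsingleton := by
    rintro _ ⟨⟨x, hx, rfl⟩, hxK⟩ _ ⟨⟨y, hy, rfl⟩, hyK⟩
    by_contra hne
    have := hmin x hx y hy (by rintro rfl; exact hne rfl)
    simp only [Set.mem_Ioi] at hxK hyK
    omega
  have hsplit : u '' S ⊆ ↑(Finset.Iic K) ∪ (u '' S ∩ Set.Ioi K) := fun x hx => by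
    by_cases h : x ≤ K
    · exact Or.inl (by simpa using h)
    · exact Or.inr ⟨hx, not_le.1 h⟩
  calc S.ncard = (u '' S).ncard := hu.ncard_image.symm
    _ ≤ (↑(Finset.Iic K) ∪ (u '' S ∩ Set.Ioi K) : Set ℕ).ncard :=
      Set.ncard_le_ncard hsplit ((Finset.finite_toSet _).union hhigh.finite)
    _ ≤ (K + 1) + 1 := by
      grw [Set.ncard_union_le, Set.ncard_coe_finset, Nat.card_Iic,
        (Set.ncard_le_one hhigh.finite).2 hhigh]

section Burst

variable {M : Type*} [Zero M] {n ℓ : ℕ}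

def IsBurst (ℓ : ℕ) (e : Fin n → M) : Prop :=
  ∀ i j : Fin n, e i ≠ 0 → e j ≠ 0 → (j : ℕ) - (i : ℕ) < ℓ

-- junk value `0` when `e = 0`
noncomputable def supportStart (e : Fin n → M) : ℕ :=
  sInf (Fin.val '' Function.support e)

theorem eq_zero_of_lt_supportStart {e : Fin n → M} {q : Fin n} (hq : (q : ℕ) < supportStart e) :
    e q = 0 := by
  by_contra hne
  exact (Nat.sInf_le (Set.mem_image_of_mem Fin.val hne)).not_gt hq

theorem IsBurst.eq_zero_of_supportStart_add_le {e : Fin n → M} (he : IsBurst ℓ e) {q : Fin n}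
    (hq : supportStart e + ℓ ≤ q) : e q = 0 := by
  by_contra hne
  obtain ⟨q₀, hq₀, hstart⟩ :=
    Nat.sInf_mem ⟨_, Set.mem_image_of_mem Fin.val (Function.mem_support.2 hne)⟩
  have := he q₀ q hq₀ hne
  rw [supportStart, ← hstart] at hq
  omega

end Burst

section ReedSolomon

variable {R : Type*} [CommRing R]

def rsCode {ι : Type*} (a : ι → R) (k : ℕ) : Set (ι → R) :=
  {c | ∃ f : R[X], f.degree < k ∧ ∀ q, c q = f.eval (a q)}

theorem rsCode.eq_of_eqOn [IsDomain R] {ι : Type*} {a : ι → R} (ha : Function.Injective a)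
    {k : ℕ} {c₁ c₂ : ι → R} (h₁ : c₁ ∈ rsCode a k) (h₂ : c₂ ∈ rsCode a k) (Q : Finset ι)
    (hQ : k ≤ Q.card) (h : ∀ q ∈ Q, c₁ q = c₂ q) : c₁ = c₂ := by
  obtain ⟨f₁, hf₁, hc₁⟩ := h₁
  obtain ⟨f₂, hf₂, hc₂⟩ := h₂
  have hk : (k : WithBot ℕ) ≤ Q.card := by exact_mod_cast hQ
  have hf : f₁ = f₂ := eq_of_degrees_lt_of_eval_index_eq Q ha.injOn (hf₁.trans_le hk)
    (hf₂.trans_le hk) fun q hq => by rw [← hc₁, ← hc₂, h q hq]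
  funext q
  rw [hc₁, hc₂, hf]

variable {n k ℓ : ℕ} {a : Fin n → R} {r c c₁ c₂ : Fin n → R}

def burstList (a : Fin n → R) (k ℓ : ℕ) (r : Fin n → R) : Set (Fin n → R) :=
  {c | c ∈ rsCode a k ∧ IsBurst ℓ (r - c)}

theorem apply_eq_of_lt_supportStart_sub {q : Fin n} (hq : (q : ℕ) < supportStart (r - c)) :
    c q = r q :=
  (sub_eq_zero.1 (eq_zero_of_lt_supportStart hq : r q - c q = 0)).symm

theorem apply_eq_of_mem_burstList (hc : c ∈ burstList a k ℓ r) {q : Fin n}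
    (hq : (q : ℕ) < supportStart (r - c) ∨ supportStart (r - c) + ℓ ≤ q) : c q = r q :=
  hq.elim apply_eq_of_lt_supportStart_sub fun hq =>
    (sub_eq_zero.1 (hc.2.eq_zero_of_supportStart_add_le hq : r q - c q = 0)).symm

theorem min_supportStart_sub_lt [IsDomain R] (ha : Function.Injective a) (hkn : k ≤ n)
    (h₁ : c₁ ∈ rsCode a k) (h₂ : c₂ ∈ rsCode a k) (hne : c₁ ≠ c₂) :
    min (supportStart (r - c₁)) (supportStart (r - c₂)) < k := by
  by_contra! hk
  rw [le_min_iff] at hk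
  refine hne (rsCode.eq_of_eqOn ha h₁ h₂ {q : Fin n | (q : ℕ) < k} ?_ fun q hq => ?_)
  · rw [Fin.card_filter_val_lt, min_eq_right hkn]
  · have hq : (q : ℕ) < k := (Finset.mem_filter.1 hq).2
    rw [apply_eq_of_lt_supportStart_sub (hq.trans_le hk.1),
      apply_eq_of_lt_supportStart_sub (hq.trans_le hk.2)]

theorem eq_of_supportStart_sub_div_eq [IsDomain R] (ha : Function.Injective a) {m : ℕ}
    (hm : 0 < m) (hn : k + ℓ + m ≤ n + 1) (h₁ : c₁ ∈ burstList a k ℓ r)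
    (h₂ : c₂ ∈ burstList a k ℓ r) (h : supportStart (r - c₁) / m = supportStart (r - c₂) / m) :
    c₁ = c₂ := by
  set u := supportStart (r - c₁) / m
  have hwindow : ∀ c ∈ burstList a k ℓ r, supportStart (r - c) / m = u → ∀ q : Fin n,
      (q : ℕ) < m * u ∨ m * u + (m + ℓ - 1) ≤ q → c q = r q := by
    intro c hc hu q hq
    refine apply_eq_of_mem_burstList hc ?_
    have hlo := Nat.div_mul_le_self (supportStart (r - c)) m
    have hhi := Nat.lt_div_mul_add (a := supportStart (r - c)) hm
    rw [hu, mul_comm] at hlo hhi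
    omega
  refine rsCode.eq_of_eqOn ha h₁.1 h₂.1 {q : Fin n | (q : ℕ) < m * u ∨ m * u + (m + ℓ - 1) ≤ q}
    ?_ fun q hq => ?_
  · have := Fin.card_filter_val_lt_or_add_le (n := n) (m * u) (m + ℓ - 1)
    omega
  · have hq := (Finset.mem_filter.1 hq).2
    rw [hwindow c₁ h₁ rfl q hq, hwindow c₂ h₂ h.symm q hq]

end ReedSolomon

theorem rs_burst_list_decodable_general
    (F : Type*) [Field F]
    (m n k : ℕ) (hm : 1 ≤ m)
    (a : Fin n → F) (ha : Function.Injective a)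
    (hkn : k ≤ n)
    (r : Fin n → F) (ℓ : ℕ) (hℓ : ℓ + k + 2 * m ≤ n) :
    Set.ncard {c : Fin n → F |
        (∃ f : Polynomial F, f.degree < k ∧ ∀ q, c q = f.eval (a q)) ∧
        (∀ i j : Fin n, (r - c) i ≠ 0 → (r - c) j ≠ 0 → (j : ℕ) - (i : ℕ) < ℓ)} ≤
      (k - 1) / m + 2 := by
  change (burstList a k ℓ r).ncard ≤ _
  refine Set.ncard_le_add_two_of_min_le (fun c => supportStart (r - c) / m) _
    (fun c₁ h₁ c₂ h₂ h => eq_of_supportStart_sub_div_eq ha hm (by omega) h₁ h₂ h)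
    fun c₁ h₁ c₂ h₂ hne => ?_
  have hlt := min_supportStart_sub_lt (r := r) ha hkn h₁.1 h₂.1 hne
  rw [← Monotone.map_min fun _ _ => Nat.div_le_div_right]
  exact Nat.div_le_div_right (by omega)

/-- Burst list-decodability of Reed–Solomon codes with a
fiber-structured evaluation set: for every received word `r` and every burst
length `ℓ ≤ n - k - 2m`, the number of codewords `c` of `RS[n,k]` such that
`r - c` is an `ℓ`-burst is at most `⌊(k-1)/m⌋ + 2`. -/
theorem rs_burst_list_decodable
    (F : Type*) [Field F] [Fintype F] [DecidableEq F]
    (m ns n k : ℕ) (hm : 1 ≤ m) (hn : n = m * ns)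
    (L : Polynomial F) (hLmonic : L.Monic) (hLdeg : L.natDegree = m)
    (b : Fin ns → F) (hb : Function.Injective b)
    (hfiber : ∀ j : Fin ns,
      (Finset.univ.filter (fun x : F => L.eval x = b j)).card = m)
    (a : Fin n → F) (ha : Function.Injective a)
    (idx : Fin m → Fin ns → Fin n)
    (hidx : ∀ i j, (idx i j : ℕ) = (j : ℕ) * m + (i : ℕ))
    (hblock : ∀ i j, L.eval (a (idx i j)) = b j)
    (hk : 1 ≤ k) (hkn : k ≤ n)
    (r : Fin n → F) (ℓ : ℕ) (hℓ : ℓ + k + 2 * m ≤ n) :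
    Set.ncard {c : Fin n → F |
        (∃ f : Polynomial F, f.degree < k ∧ ∀ q, c q = f.eval (a q)) ∧
        (∀ i j : Fin n, (r - c) i ≠ 0 → (r - c) j ≠ 0 → (j : ℕ) - (i : ℕ) < ℓ)} ≤
      (k - 1) / m + 2 :=
  rs_burst_list_decodable_general F m n k hm a ha hkn r ℓ hℓ
end

section
/- Let F_q be a finite field, let L ∈ F_q[X] be monic of degree m ≥ 1, and let b_1,…,b_{n_s} ∈ F_q be pairwise distinct such that each fiber P[j] = {a ∈ F_q : L(a) = b_j} has exactly m elements. Set n = m·n_s, enumerate the evaluation points a_1,…,a_n fiber by fiber, and let 1 ≤ k ≤ n. Write each f ∈ F_q[X] with deg f < k uniquely as f = Σ_{u=0}^{m−1} f_u(L(X))·X^u. Then the map τ sending the codeword (f(a_1),…,f(a_n)) ∈ RS[n,k] to the m×n_s matrix whose (u+1, j) entry is f_u(b_j) is a bijection from RS[n,k] onto the heterogeneous interleaved Reed–Solomon code IRS_m(n_s; k_0,…,k_{m−1}) = {M ∈ F_q^{m×n_s} : for each u, row u+1 of M equals (g_u(b_1),…,g_u(b_{n_s})) for some g_u ∈ F_q[X]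 with deg g_u < k_u}, where k_u = ⌊(k−1−u)/m⌋ + 1 (so g_u = 0 whenever k_u ≤ 0). -/
/-!
Dividing repeatedly by the monic `L` writes every `f` as `∑_{u < m} f_u(L) X^u`. The term
`f_u(L) X^u` has degree `m · deg f_u + u`; these degrees are distinct modulo `m`, so `deg f` is the
largest of them. This gives uniqueness of the `f_u`, and shows that `deg f < k` iff
`deg f_u < ⌊(k - 1 - u)/m⌋ + 1` for every `u`, which forces `deg f_u < n_s`. Hence `τ` is
interpolation at the `a_i`, then decomposition, then evaluation at the `b_j`, each a bijection
between the relevant degree-bounded sets.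
-/

open Polynomial

namespace Polynomial

section Decomposition

variable {R : Type*} [CommRing R] {L : R[X]}

theorem eq_sum_C_coeff_mul_X_pow {p : R[X]} (hp : p.natDegree < L.natDegree) :
    p = ∑ u : Fin L.natDegree, C (p.coeff u) * X ^ (u : ℕ) := by
  rw [Fin.sum_univ_eq_sum_range (fun u => C (p.coeff u) * X ^ u)]
  conv_lhs => rw [p.as_sum_range' _ hp]
  simp only [C_mul_X_pow_eq_monomial]

theorem exists_eq_sum_comp_mul_X_pow (hL : L.Monic) (hL0 : 0 < L.natDegree) (f : R[X]) :
    ∃ g : Fin L.natDegree → R[X], f = ∑ u, (g u).comp L * X ^ (u : ℕ) := by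
  induction hd : f.natDegree using Nat.strong_induction_on generalizing f with
  | _ d ih =>
  obtain ⟨g, hg⟩ :
      ∃ g : Fin L.natDegree → R[X], f /ₘ L = ∑ u, (g u).comp L * X ^ (u : ℕ) := by
    by_cases hq : f /ₘ L = 0
    · exact ⟨0, by simp [hq]⟩
    have hf : f ≠ 0 := by rintro rfl; simp at hq
    refine ih _ ?_ _ rfl
    rw [← hd]
    exact natDegree_lt_natDegree hq
      (degree_divByMonic_lt f L hf (natDegree_pos_iff_degree_pos.1 hL0))
  have hr : (f %ₘ L).natDegree < L.natDegree :=
    natDegree_modByMonic_lt f hL fun h => by simp [h] at hL0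
  refine ⟨fun u => X * g u + C ((f %ₘ L).coeff u), ?_⟩
  calc f = L * (f /ₘ L) + f %ₘ L := by rw [add_comm, modByMonic_add_div]
    _ = L * ∑ u, (g u).comp L * X ^ (u : ℕ) +
          ∑ u : Fin L.natDegree, C ((f %ₘ L).coeff u) * X ^ (u : ℕ) := by
      rw [hg, ← eq_sum_C_coeff_mul_X_pow hr]
    _ = _ := by
      simp only [add_comp, mul_comp, X_comp, C_comp, add_mul, Finset.sum_add_distrib,
        Finset.mul_sum, mul_assoc]

variable [IsDomain R]

theorem natDegree_comp_mul_X_pow {p : R[X]} {u : ℕ} (h : p.comp L * X ^ u ≠ 0) :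
    (p.comp L * X ^ u).natDegree = L.natDegree * p.natDegree + u := by
  rw [natDegree_mul (left_ne_zero_of_mul h) (pow_ne_zero _ X_ne_zero), natDegree_comp,
    natDegree_X_pow, mul_comm]

theorem comp_mul_X_pow_ne_zero (hL : 0 < L.natDegree) {p : R[X]} (hp : p ≠ 0) (u : ℕ) :
    p.comp L * X ^ u ≠ 0 := by
  refine mul_ne_zero (fun h => ?_) (pow_ne_zero _ X_ne_zero)
  rcases comp_eq_zero_iff.1 h with h | ⟨-, hC⟩
  · exact hp h
  · rw [hC, natDegree_C] at hL
    exact hL.false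

theorem degree_comp_mul_X_pow_lt_iff (hL : 0 < L.natDegree) {p : R[X]} {u k : ℕ} :
    (p.comp L * X ^ u).degree < (k : WithBot ℕ) ↔
      p = 0 ∨ L.natDegree * p.natDegree + u < k := by
  rcases eq_or_ne p 0 with rfl | hp
  · simp
  have h := comp_mul_X_pow_ne_zero hL hp u
  rw [degree_eq_natDegree h, natDegree_comp_mul_X_pow h, Nat.cast_lt]
  simp [hp]

theorem degree_lt_of_degree_comp_mul_X_pow_lt (hL : 0 < L.natDegree) {p : R[X]} {u N : ℕ}
    (h : (p.comp L * X ^ u).degree < ((L.natDegree * N : ℕ) : WithBot ℕ)) : p.degree < N := by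
  rcases (degree_comp_mul_X_pow_lt_iff hL).1 h with rfl | h
  · exact WithBot.bot_lt_coe N
  · exact degree_le_natDegree.trans_lt
      (Nat.cast_lt.2 (Nat.lt_of_mul_lt_mul_left (Nat.le_add_right _ u |>.trans_lt h)))

theorem degree_sum_comp_mul_X_pow (g : Fin L.natDegree → R[X]) :
    (∑ u, (g u).comp L * X ^ (u : ℕ)).degree =
      Finset.univ.sup fun u => ((g u).comp L * X ^ (u : ℕ)).degree := by
  refine degree_sum_eq_of_disjoint _ _ fun u hu v hv huv hdeg => huv (Fin.ext ?_)
  have h := natDegree_eq_of_degree_eq hdeg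
  rw [natDegree_comp_mul_X_pow hu.2, natDegree_comp_mul_X_pow hv.2] at h
  simpa [Nat.mod_eq_of_lt u.isLt, Nat.mod_eq_of_lt v.isLt] using congrArg (· % L.natDegree) h

theorem degree_sum_comp_mul_X_pow_lt_iff (g : Fin L.natDegree → R[X]) (k : ℕ) :
    (∑ u, (g u).comp L * X ^ (u : ℕ)).degree < (k : WithBot ℕ) ↔
      ∀ u, ((g u).comp L * X ^ (u : ℕ)).degree < (k : WithBot ℕ) := by
  simp [degree_sum_comp_mul_X_pow]

theorem injective_sum_comp_mul_X_pow (hL : 0 < L.natDegree) :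
    Function.Injective fun g : Fin L.natDegree → R[X] => ∑ u, (g u).comp L * X ^ (u : ℕ) := by
  intro g h hgh
  have hsum : ∑ u, (g u - h u).comp L * X ^ (u : ℕ) = 0 := by
    simpa only [sub_comp, sub_mul, Finset.sum_sub_distrib, sub_eq_zero] using hgh
  have hterm := (degree_sum_comp_mul_X_pow_lt_iff (fun u => g u - h u) 0).1
    (by rw [hsum, degree_zero]; exact WithBot.bot_lt_coe 0)
  funext u
  simpa [sub_eq_zero] using (degree_comp_mul_X_pow_lt_iff hL).1 (hterm u)

theorem bijOn_sum_comp_mul_X_pow (hL : L.Monic) (hL0 : 0 < L.natDegree) (k : ℕ) :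
    Set.BijOn (fun g : Fin L.natDegree → R[X] => ∑ u, (g u).comp L * X ^ (u : ℕ))
      {g | ∀ u, ((g u).comp L * X ^ (u : ℕ)).degree < (k : WithBot ℕ)}
      {f | f.degree < (k : WithBot ℕ)} := by
  refine ⟨fun g hg => (degree_sum_comp_mul_X_pow_lt_iff g k).2 hg,
    (injective_sum_comp_mul_X_pow hL0).injOn, fun f hf => ?_⟩
  obtain ⟨g, rfl⟩ := exists_eq_sum_comp_mul_X_pow hL hL0 f
  exact ⟨g, (degree_sum_comp_mul_X_pow_lt_iff g k).1 hf, rfl⟩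

end Decomposition

section Evaluation

variable {R : Type*} [CommRing R] [IsDomain R]

theorem bijOn_eval_degree_lt {ι : Type*} [Fintype ι] {a : ι → R} (ha : Function.Injective a)
    {k : ℕ} (hk : k ≤ Fintype.card ι) :
    Set.BijOn (fun (f : R[X]) q => f.eval (a q)) {f | f.degree < (k : WithBot ℕ)}
      {c | ∃ f : R[X], f.degree < k ∧ ∀ q, c q = f.eval (a q)} := by
  have hk' : (k : WithBot ℕ) ≤ (Finset.univ : Finset ι).card := by simpa using hk
  refine ⟨fun f hf => ⟨f, hf, fun _ => rfl⟩, fun f hf g hg hfg => ?_,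
    fun c ⟨f, hf, hc⟩ => ⟨f, hf, _root_.funext fun q => (hc q).symm⟩⟩
  exact eq_of_degrees_lt_of_eval_index_eq _ ha.injOn (hf.trans_le hk') (hg.trans_le hk')
    fun q _ => congrFun hfg q

theorem bijOn_matrixOf_eval {ι κ : Type*} [Fintype κ] {b : κ → R} (hb : Function.Injective b)
    (P : ι → R[X] → Prop) (hP : ∀ u p, P u p → p.degree < Fintype.card κ) :
    Set.BijOn (fun g : ι → R[X] => Matrix.of fun u j => (g u).eval (b j)) {g | ∀ u, P u (g u)}
      {M | ∀ u, ∃ p, P u p ∧ ∀ j, M u j = p.eval (b j)} := by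
  have hP' : ∀ u p, P u p → p.degree < (Finset.univ : Finset κ).card := by simpa using hP
  refine ⟨fun g hg u => ⟨g u, hg u, fun _ => rfl⟩, fun g hg h hh hgh => ?_, fun M hM => ?_⟩
  · funext u
    exact eq_of_degrees_lt_of_eval_index_eq _ hb.injOn (hP' u _ (hg u)) (hP' u _ (hh u))
      fun j _ => congrFun (congrFun hgh u) j
  · choose g hg hgM using hM
    exact ⟨g, hg, Matrix.ext fun u j => (hgM u j).symm⟩

end Evaluation

end Polynomial

theorem Nat.mul_add_lt_iff_lt_fdiv_add_one {m d u k : ℕ} (hm : 0 < m) :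
    m * d + u < k ↔ (d : ℤ) < ((k : ℤ) - 1 - u).fdiv m + 1 := by
  rw [Int.fdiv_eq_ediv_of_nonneg _ (by positivity), Int.lt_add_one_iff,
    Int.le_ediv_iff_mul_le (by exact_mod_cast hm)]
  constructor <;> intro h
  · zify at h; linarith
  · zify; linarith

theorem rs_irs_bijection_general
    (F : Type*) [Field F]
    (m ns n k : ℕ) (hm : 1 ≤ m) (hn : n = m * ns)
    (L : Polynomial F) (hLmonic : L.Monic) (hLdeg : L.natDegree = m)
    (b : Fin ns → F) (hb : Function.Injective b)
    (a : Fin n → F) (ha : Function.Injective a)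
    (hkn : k ≤ n) :
    ∃ τ : (Fin n → F) → Matrix (Fin m) (Fin ns) F,
      Set.BijOn τ
        {c : Fin n → F | ∃ f : Polynomial F, f.degree < k ∧ ∀ q, c q = f.eval (a q)}
        {M : Matrix (Fin m) (Fin ns) F | ∀ u : Fin m, ∃ g : Polynomial F,
          (g = 0 ∨ (g.natDegree : ℤ) < ((k : ℤ) - 1 - (u : ℕ)).fdiv (m : ℤ) + 1) ∧
          ∀ j, M u j = g.eval (b j)} ∧
      ∀ f : Polynomial F, f.degree < k →
        ∀ fu : Fin m → Polynomial F,
          f = ∑ u : Fin m, (fu u).comp L * X ^ (u : ℕ) →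
          τ (fun q => f.eval (a q)) = Matrix.of fun u j => (fu u).eval (b j) := by
  subst hLdeg
  set S := {g : Fin L.natDegree → F[X] |
    ∀ u, ((g u).comp L * X ^ (u : ℕ)).degree < (k : WithBot ℕ)}
  set Φ := fun (g : Fin L.natDegree → F[X]) q => (∑ u, (g u).comp L * X ^ (u : ℕ)).eval (a q)
  set Ψ := fun (g : Fin L.natDegree → F[X]) => Matrix.of fun u j => (g u).eval (b j)
  have hΦ : Set.BijOn Φ S _ := (bijOn_eval_degree_lt ha (k := k) (by simpa using hkn)).comp
    (bijOn_sum_comp_mul_X_pow hLmonic hm k)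
  have hΨ : Set.BijOn Ψ S _ := bijOn_matrixOf_eval hb
    (fun (u : Fin L.natDegree) p => (p.comp L * X ^ (u : ℕ)).degree < (k : WithBot ℕ))
    fun _ _ hp => by
      have hkn' : (k : WithBot ℕ) ≤ (L.natDegree * ns : ℕ) := by simpa [← hn] using hkn
      simpa using degree_lt_of_degree_comp_mul_X_pow_lt hm (hp.trans_le hkn')
  refine ⟨Ψ ∘ Function.invFunOn Φ S, ?_, ?_⟩
  · convert hΨ.comp (hΦ.symm hΦ.invOn_invFunOn.symm) using 1
    simp only [degree_comp_mul_X_pow_lt_iff hm, Nat.mul_add_lt_iff_lt_fdiv_add_one hm]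
  · rintro f hf fu rfl
    have hfu : fu ∈ S := (degree_sum_comp_mul_X_pow_lt_iff fu k).1 hf
    exact congrArg Ψ (hΦ.injOn.leftInvOn_invFunOn hfu)

/-- The fold-then-column-transform map `τ`, sending the
Reed–Solomon codeword `(f(a_1),…,f(a_n))` (with `f = Σ_u f_u(L(X))·X^u`,
`deg f < k`) to the `m × n_s` matrix with `(u,j)` entry `f_u(b_j)`, is a
bijection from `RS[n,k]` onto the heterogeneous interleaved Reed–Solomon code
`IRS_m(n_s; k_0,…,k_{m-1})` with `k_u = ⌊(k-1-u)/m⌋ + 1`. -/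
theorem rs_irs_bijection
    (F : Type*) [Field F] [Fintype F] [DecidableEq F]
    (m ns n k : ℕ) (hm : 1 ≤ m) (hn : n = m * ns)
    (L : Polynomial F) (hLmonic : L.Monic) (hLdeg : L.natDegree = m)
    (b : Fin ns → F) (hb : Function.Injective b)
    (hfiber : ∀ j : Fin ns,
      (Finset.univ.filter (fun x : F => L.eval x = b j)).card = m)
    (a : Fin n → F) (ha : Function.Injective a)
    (idx : Fin m → Fin ns → Fin n)
    (hidx : ∀ i j, (idx i j : ℕ) = (j : ℕ) * m + (i : ℕ))
    (hblock : ∀ i j, L.eval (a (idx i j)) = b j)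
    (hk : 1 ≤ k) (hkn : k ≤ n) :
    ∃ τ : (Fin n → F) → Matrix (Fin m) (Fin ns) F,
      Set.BijOn τ
        {c : Fin n → F | ∃ f : Polynomial F, f.degree < k ∧ ∀ q, c q = f.eval (a q)}
        {M : Matrix (Fin m) (Fin ns) F | ∀ u : Fin m, ∃ g : Polynomial F,
          (g = 0 ∨ (g.natDegree : ℤ) < ((k : ℤ) - 1 - (u : ℕ)).fdiv (m : ℤ) + 1) ∧
          ∀ j, M u j = g.eval (b j)} ∧
      ∀ f : Polynomial F, f.degree < k →
        ∀ fu : Fin m → Polynomial F,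
          f = ∑ u : Fin m, (fu u).comp L * X ^ (u : ℕ) →
          τ (fun q => f.eval (a q)) = Matrix.of fun u j => (fu u).eval (b j) :=
  rs_irs_bijection_general F m ns n k hm hn L hLmonic hLdeg b hb a ha hkn
end

section
/- Let F_q be a finite field and let m, u be positive integers with n = m·u. If e ∈ F_q^n is an ℓ-burst for some 0 ≤ ℓ ≤ n, then the m×u matrix E over F_q defined by E_{i,j} = e_{(j−1)m+i} (folding e into columns of length m) is a (⌊ℓ/m⌋ + 2)-burst matrix. (Lemma 2.6 of the paper.) -/
/-- Entries in columns `j < j'` of a matrix with columns of length `m` sit at least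
`(j' - j - 1) * m + 1` apart in the flattened vector. -/
theorem Nat.sub_lt_div_add_two_of_mul_add_sub_lt {m i i' j j' ℓ : ℕ} (hi : i < m)
    (h : j' * m + i' - (j * m + i) < ℓ) : j' - j < ℓ / m + 2 := by
  rcases le_or_gt j' j with hle | hlt
  · rw [Nat.sub_eq_zero_of_le hle]
    positivity
  obtain ⟨c, rfl⟩ : ∃ c, j' = j + c + 1 := ⟨j' - j - 1, by omega⟩
  have hgap : c * m ≤ ℓ := by
    rw [show (j + c + 1) * m = j * m + c * m + m by ring] at h
    omega
  have hc : c ≤ ℓ / m := (Nat.le_div_iff_mul_le (by omega)).2 hgap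
  omega

theorem fold_burst_general
    (F : Type*) [Field F] (m u : ℕ)
    (e : Fin (m * u) → F) (ℓ : ℕ)
    (hburst : ∀ i j : Fin (m * u), e i ≠ 0 → e j ≠ 0 → (j : ℕ) - (i : ℕ) < ℓ)
    (idx : Fin m → Fin u → Fin (m * u))
    (hidx : ∀ i j, (idx i j : ℕ) = (j : ℕ) * m + (i : ℕ))
    (E : Matrix (Fin m) (Fin u) F)
    (hE : ∀ i j, E i j = e (idx i j)) :
    ∀ j j' : Fin u, (∃ i, E i j ≠ 0) → (∃ i, E i j' ≠ 0) →
      (j' : ℕ) - (j : ℕ) < ℓ / m + 2 := by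
  rintro j j' ⟨i, hi⟩ ⟨i', hi'⟩
  rw [hE] at hi hi'
  have hgap := hburst (idx i j) (idx i' j') hi hi'
  rw [hidx, hidx] at hgap
  exact Nat.sub_lt_div_add_two_of_mul_add_sub_lt i.isLt hgap

/-- Lemma 2.6 of the paper. Folding an `ℓ`-burst vector
`e ∈ F^{m·u}` into an `m × u` matrix `E` (with `E i j = e ((j)m + i)`, columns
of length `m`) yields a `(⌊ℓ/m⌋ + 2)`-burst matrix. -/
theorem fold_burst
    (F : Type*) [Field F] (m u : ℕ) (hm : 0 < m) (hu : 0 < u)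
    (e : Fin (m * u) → F) (ℓ : ℕ) (hℓ : ℓ ≤ m * u)
    (hburst : ∀ i j : Fin (m * u), e i ≠ 0 → e j ≠ 0 → (j : ℕ) - (i : ℕ) < ℓ)
    (idx : Fin m → Fin u → Fin (m * u))
    (hidx : ∀ i j, (idx i j : ℕ) = (j : ℕ) * m + (i : ℕ))
    (E : Matrix (Fin m) (Fin u) F)
    (hE : ∀ i j, E i j = e (idx i j)) :
    ∀ j j' : Fin u, (∃ i, E i j ≠ 0) → (∃ i, E i j' ≠ 0) →
      (j' : ℕ) - (j : ℕ) < ℓ / m + 2 :=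
  fold_burst_general F m u e ℓ hburst idx hidx E hE
end

section
/- Let F_q be a finite field, let L ∈ F_q[X] be monic of degree m ≥ 1, and let b_1,…,b_{n_s} ∈ F_q be pairwise distinct such that each fiber P[j] = {a ∈ F_q : L(a) = b_j} has exactly m elements. Set n = m·n_s, enumerate the evaluation points a_1,…,a_n fiber by fiber, and let 1 ≤ k ≤ n. Let f ∈ F_q[X] with deg f < k, write f = Σ_{u=0}^{m−1} f_u(L(X))·X^u, let c = (f(a_1),…,f(a_n)), and let r = c + e where e ∈ F_q^n is an ℓ-burst. For each j let g_j = Σ_{u=0}^{m−1} g_{u,j} X^u be the unique polynomial of degree < m that agrees with the j-th block of r on the m points of P[j] (i.e. g_j(a_{(j−1)m+i}) = r_{(j−1)m+i} for 1 ≤ i ≤ m). Then for every j we have (g_{0,j},…,g_{m−1,j}) = (f_0(b_j),…,f_{m−1}(b_j)) if and only if the j-th block (e_{(j−1)m+1},…,e_{jm}) of e is zero; moreover the set J = {j : the j-th block of e is nonzero}, if nonempty, satisfies max J − min J < ⌊ℓ/m⌋ + 2. -/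
/-!
Fix a column `j`. Both `g j` and the column polynomial `∑ᵤ fᵤ(b_j) Xᵘ` have degree `< m`, so they
are equal iff their coefficient vectors agree, and, being determined by interpolation on the `m`
points of the fiber `L⁻¹(b_j)`, iff they agree there. On that fiber `L` is constantly `b_j`, so the
column polynomial takes the values of `f`, i.e. of `c`, while `g j` takes those of `r = c + e`.
Hence column `j` is correct iff block `j` of `e` vanishes. Nonzero entries in blocks `j₁ ≤ j₂`
sit at distance at least `(j₂ - j₁ - 1) m + 1`, which the burst length bounds.
-/

open Polynomial

namespace Polynomial

theorem eq_ofFn_iff_coeff_eq {R : Type*} [Semiring R] [DecidableEq R] {n : ℕ} {p : R[X]}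
    (hp : p.degree < n) (v : Fin n → R) :
    p = ofFn n v ↔ ∀ u : Fin n, p.coeff u = v u := by
  refine ⟨fun h u => by simp [h], fun h => ?_⟩
  ext i
  rcases lt_or_ge i n with hi | hi
  · rw [ofFn_coeff_eq_val_of_lt v hi, h ⟨i, hi⟩]
  · rw [ofFn_coeff_eq_zero_of_ge v hi,
      coeff_eq_zero_of_degree_lt (hp.trans_le (by exact_mod_cast hi))]

theorem eq_iff_eval_eq_of_degree_lt {R ι : Type*} [CommRing R] [IsDomain R] [Fintype ι]
    {v : ι → R} (hv : Function.Injective v) {p q : R[X]}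
    (hp : p.degree < Fintype.card ι) (hq : q.degree < Fintype.card ι) :
    p = q ↔ ∀ i, p.eval (v i) = q.eval (v i) :=
  ⟨fun h _ => h ▸ rfl, fun h =>
    eq_of_degrees_lt_of_eval_index_eq Finset.univ hv.injOn hp hq fun i _ => h i⟩

theorem eval_ofFn_eval_eq_eval_sum_comp {R : Type*} [CommSemiring R] [DecidableEq R] {n : ℕ}
    (fu : Fin n → R[X]) (L : R[X]) {x y : R} (hx : L.eval x = y) :
    (ofFn n fun u => (fu u).eval y).eval x = (∑ u : Fin n, (fu u).comp L * X ^ (u : ℕ)).eval x := by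
  simp [ofFn_eq_sum_monomial, eval_finsetSum, eval_monomial, hx]

end Polynomial

theorem Nat.sub_lt_div_add_two_of_sub_lt {m ℓ j₁ j₂ i₁ i₂ : ℕ} (hi₁ : i₁ < m) (hi₂ : i₂ < m)
    (h : j₁ * m + i₁ - (j₂ * m + i₂) < ℓ) : j₁ - j₂ < ℓ / m + 2 := by
  refine Nat.lt_of_mul_lt_mul_right (a := m) ?_
  calc (j₁ - j₂) * m < ℓ + m := by rw [Nat.sub_mul]; omega
    _ < ℓ / m * m + m + m := Nat.add_lt_add_right (Nat.lt_div_mul_add (Nat.zero_lt_of_lt hi₁)) m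
    _ = (ℓ / m + 2) * m := by ring

theorem burst_reduction_general
    (F : Type*) [Field F] [DecidableEq F]
    (m ns n : ℕ)
    (L : Polynomial F)
    (b : Fin ns → F)
    (a : Fin n → F) (ha : Function.Injective a)
    (idx : Fin m → Fin ns → Fin n)
    (hidx : ∀ i j, (idx i j : ℕ) = (j : ℕ) * m + (i : ℕ))
    (hblock : ∀ i j, L.eval (a (idx i j)) = b j)
    (f : Polynomial F)
    (fu : Fin m → Polynomial F)
    (hdecomp : f = ∑ u : Fin m, (fu u).comp L * X ^ (u : ℕ))
    (c r e : Fin n → F)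
    (hc : ∀ q, c q = f.eval (a q)) (hr : r = c + e)
    (ℓ : ℕ)
    (hburst : ∀ i j : Fin n, e i ≠ 0 → e j ≠ 0 → (j : ℕ) - (i : ℕ) < ℓ)
    (g : Fin ns → Polynomial F)
    (hgdeg : ∀ j, (g j).degree < m)
    (hg : ∀ j i, (g j).eval (a (idx i j)) = r (idx i j)) :
    (∀ j : Fin ns,
      (∀ u : Fin m, (g j).coeff (u : ℕ) = (fu u).eval (b j)) ↔
        (∀ i : Fin m, e (idx i j) = 0)) ∧
    (∀ hJ : (Finset.univ.filter
        (fun j : Fin ns => ∃ i : Fin m, e (idx i j) ≠ 0)).Nonempty,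
      (((Finset.univ.filter
          (fun j : Fin ns => ∃ i : Fin m, e (idx i j) ≠ 0)).max' hJ : ℕ) -
        ((Finset.univ.filter
          (fun j : Fin ns => ∃ i : Fin m, e (idx i j) ≠ 0)).min' hJ : ℕ)
        < ℓ / m + 2)) := by
  refine ⟨fun j => ?_, fun hJ => ?_⟩
  · have hidx_inj : Function.Injective fun i => idx i j := fun i₁ i₂ h => by
      have := congrArg Fin.val h
      simp only [hidx] at this
      exact Fin.ext (by omega)
    have hfiber_inj : Function.Injective fun i => a (idx i j) := ha.comp hidx_inj
    have hcol := ofFn_degree_lt (n := m) fun u => (fu u).eval (b j)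
    have hcol_eval : ∀ i, (ofFn m fun u => (fu u).eval (b j)).eval (a (idx i j)) = c (idx i j) :=
      fun i => by rw [hc, hdecomp, eval_ofFn_eval_eq_eval_sum_comp fu L (hblock i j)]
    rw [← eq_ofFn_iff_coeff_eq (hgdeg j),
      eq_iff_eval_eq_of_degree_lt hfiber_inj (by simpa using hgdeg j) (by simpa using hcol)]
    simp [hg, hcol_eval, hr]
  · set J := Finset.univ.filter fun j : Fin ns => ∃ i : Fin m, e (idx i j) ≠ 0
    obtain ⟨i₁, he₁⟩ := (Finset.mem_filter.mp (J.max'_mem hJ)).2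
    obtain ⟨i₂, he₂⟩ := (Finset.mem_filter.mp (J.min'_mem hJ)).2
    have h := hburst _ _ he₂ he₁
    rw [hidx, hidx] at h
    exact Nat.sub_lt_div_add_two_of_sub_lt i₁.isLt i₂.isLt h

/-- The central reduction step: under the fold-then-interpolate
map, an `ℓ`-burst error `e` on a Reed–Solomon codeword corresponds to a set of
corrupted columns of the interleaved code; column `j` is uncorrupted (i.e. the
coefficients of the local interpolant `g_j` equal `(f_0(b_j),…,f_{m-1}(b_j))`)
exactly when block `j` of `e` is zero, and the corrupted columns span an
interval of width `< ⌊ℓ/m⌋ + 2`. -/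
theorem burst_reduction
    (F : Type*) [Field F] [Fintype F] [DecidableEq F]
    (m ns n k : ℕ) (hm : 1 ≤ m) (hn : n = m * ns)
    (L : Polynomial F) (hLmonic : L.Monic) (hLdeg : L.natDegree = m)
    (b : Fin ns → F) (hb : Function.Injective b)
    (hfiber : ∀ j : Fin ns,
      (Finset.univ.filter (fun x : F => L.eval x = b j)).card = m)
    (a : Fin n → F) (ha : Function.Injective a)
    (idx : Fin m → Fin ns → Fin n)
    (hidx : ∀ i j, (idx i j : ℕ) = (j : ℕ) * m + (i : ℕ))
    (hblock : ∀ i j, L.eval (a (idx i j)) = b j)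
    (hk : 1 ≤ k) (hkn : k ≤ n)
    (f : Polynomial F) (hfdeg : f.degree < k)
    (fu : Fin m → Polynomial F)
    (hdecomp : f = ∑ u : Fin m, (fu u).comp L * X ^ (u : ℕ))
    (c r e : Fin n → F)
    (hc : ∀ q, c q = f.eval (a q)) (hr : r = c + e)
    (ℓ : ℕ)
    (hburst : ∀ i j : Fin n, e i ≠ 0 → e j ≠ 0 → (j : ℕ) - (i : ℕ) < ℓ)
    (g : Fin ns → Polynomial F)
    (hgdeg : ∀ j, (g j).degree < m)
    (hg : ∀ j i, (g j).eval (a (idx i j)) = r (idx i j)) :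
    (∀ j : Fin ns,
      (∀ u : Fin m, (g j).coeff (u : ℕ) = (fu u).eval (b j)) ↔
        (∀ i : Fin m, e (idx i j) = 0)) ∧
    (∀ hJ : (Finset.univ.filter
        (fun j : Fin ns => ∃ i : Fin m, e (idx i j) ≠ 0)).Nonempty,
      (((Finset.univ.filter
          (fun j : Fin ns => ∃ i : Fin m, e (idx i j) ≠ 0)).max' hJ : ℕ) -
        ((Finset.univ.filter
          (fun j : Fin ns => ∃ i : Fin m, e (idx i j) ≠ 0)).min' hJ : ℕ)
        < ℓ / m + 2)) :=
  burst_reduction_general F m ns n L b a ha idx hidx hblock f fu hdecomp c r e hc hr ℓ hburst g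
    hgdeg hg
end

section
/- Let ℓ be a prime power and F_q = F_{ℓ^u}. Let T be a multiplicative subgroup of F_ℓ^* of order t, let W ⊆ F_q be an F_ℓ-linear subspace of dimension w, and let L(X) = ∏_{α∈W}(X − α) ∈ F_q[X]. Then for every γ ∈ F_q with L(γ) ≠ 0, the set of roots in F_q of the polynomial L(X)^t − L(γ)^t is exactly {u·(γ + v) : u ∈ T, v ∈ W}, and this set has exactly t·ℓ^w elements. (Lemma 4.1 of the paper: the places x_r − L(γ)^t split completely, with the places lying above them given by these evaluation points.) -/
/-!
For `c ∈ K` and `v ∈ W` the subspace polynomial satisfies `L(c(x + v)) = c^{|W|} L(x) = c L(x)`,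
because `W` is permuted by translation by `v` and by scaling by `c`, and `|W|` is a power of
`|K|`. So, as `c^t = 1` on `T`, each point `c(γ + v)` is a root of `L^t - L(γ)^t`; these points
are pairwise distinct since `L(c(γ + v)) = c L(γ)` with `L(γ) ≠ 0` recovers `c`, and then `v`.
There are `t·|W|` of them, the degree of `L^t - L(γ)^t`, so there are no other roots.
-/

open Polynomial

section SubspacePoly

variable {K F : Type*} [Field K] [Field F] [Algebra K F]

noncomputable def subspacePoly (W : Submodule K F) [Finite W] : F[X] :=
  ∏ α ∈ (Set.toFinite (W : Set F)).toFinset, (X - C α)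

variable (W : Submodule K F) [Finite W]

theorem card_toFinset_toFinite_coe : (Set.toFinite (W : Set F)).toFinset.card = Nat.card W := by
  rw [← Set.ncard_eq_toFinset_card (W : Set F)]
  exact (Nat.card_coe_set_eq (W : Set F)).symm

theorem natDegree_subspacePoly : (subspacePoly W).natDegree = Nat.card W := by
  rw [subspacePoly, natDegree_prod _ _ fun a _ => X_sub_C_ne_zero a]
  simp [card_toFinset_toFinite_coe]

theorem eval_subspacePoly_zero : (subspacePoly W).eval 0 = 0 := by
  simp only [subspacePoly, eval_prod]
  exact Finset.prod_eq_zero (i := 0) (by simp) (by simp)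

theorem eval_subspacePoly_add_of_mem {v : F} (hv : v ∈ W) (x : F) :
    (subspacePoly W).eval (x + v) = (subspacePoly W).eval x := by
  simp only [subspacePoly, eval_prod, eval_sub, eval_X, eval_C]
  refine Finset.prod_nbij' (· - v) (· + v) ?_ ?_ ?_ ?_ fun a _ => by ring
  all_goals simp_all [W.sub_mem, W.add_mem]

theorem eval_subspacePoly_smul_eq_pow_card_smul {c : K} (hc : c ≠ 0) (x : F) :
    (subspacePoly W).eval (c • x) = c ^ Nat.card W • (subspacePoly W).eval x := by
  simp only [subspacePoly, eval_prod, eval_sub, eval_X, eval_C]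
  rw [← card_toFinset_toFinite_coe, Finset.smul_prod]
  refine Finset.prod_nbij' (c⁻¹ • ·) (c • ·) ?_ ?_ ?_ ?_ fun a _ => ?_
  · simpa using fun a ha => W.smul_mem c⁻¹ ha
  · simpa using fun a ha => W.smul_mem c ha
  · simp [smul_smul, hc]
  · simp [smul_smul, hc]
  · simp [smul_sub, smul_smul, hc]

theorem eval_subspacePoly_smul [Finite K] (c : K) (x : F) :
    (subspacePoly W).eval (c • x) = c • (subspacePoly W).eval x := by
  rcases eq_or_ne c 0 with rfl | hc
  · simp [eval_subspacePoly_zero]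
  have : Module.Finite K W := Module.Finite.of_finite
  have := Fintype.ofFinite K
  rw [eval_subspacePoly_smul_eq_pow_card_smul W hc, Module.natCard_eq_pow_finrank (K := K),
    Nat.card_eq_fintype_card, FiniteField.pow_card_pow]

end SubspacePoly

section Subfield

variable {F : Type*} [Field F] {K : Subfield F} [Finite K] (W : Submodule K F) [Finite W]

theorem eval_subspacePoly_mul_add_of_mem {c : F} (hc : c ∈ K) {v : F} (hv : v ∈ W) (x : F) :
    (subspacePoly W).eval (c * (x + v)) = c * (subspacePoly W).eval x := by
  have := eval_subspacePoly_smul W ⟨c, hc⟩ (x + v)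
  rwa [eval_subspacePoly_add_of_mem W hv, Subfield.smul_def, Subfield.smul_def] at this

theorem eval_subspacePoly_mul_add_pow_natCard {T : Subgroup Fˣ} (hT : ∀ c ∈ T, (c : F) ∈ K)
    {c : Fˣ} (hc : c ∈ T) {v : F} (hv : v ∈ W) (x : F) :
    (subspacePoly W).eval (c * (x + v)) ^ Nat.card T = (subspacePoly W).eval x ^ Nat.card T := by
  have hct : (c : F) ^ Nat.card T = 1 := by
    rw [← Units.val_pow_eq_pow_val, Units.val_eq_one, ← orderOf_dvd_iff_pow_eq_one]
    exact T.orderOf_dvd_natCard hc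
  rw [eval_subspacePoly_mul_add_of_mem W (hT c hc) hv, mul_pow, hct, one_mul]

theorem injOn_mul_add_of_eval_subspacePoly_ne_zero {T : Set Fˣ} (hT : ∀ c ∈ T, (c : F) ∈ K)
    {γ : F} (hγ : (subspacePoly W).eval γ ≠ 0) :
    Set.InjOn (fun p : Fˣ × F => (p.1 : F) * (γ + p.2)) (T ×ˢ W) := by
  rintro ⟨c, v⟩ ⟨hc, hv⟩ ⟨c', v'⟩ ⟨hc', hv'⟩ h
  dsimp only at h
  have hL : (c : F) * (subspacePoly W).eval γ = c' * (subspacePoly W).eval γ := by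
    rw [← eval_subspacePoly_mul_add_of_mem W (hT c hc) hv,
      ← eval_subspacePoly_mul_add_of_mem W (hT c' hc') hv', h]
  obtain rfl : c = c' := Units.ext (mul_right_cancel₀ hγ hL)
  rw [add_left_cancel (mul_left_cancel₀ c.ne_zero h)]

theorem ncard_setOf_mul_add_of_eval_subspacePoly_ne_zero {T : Subgroup Fˣ}
    (hT : ∀ c ∈ T, (c : F) ∈ K) {γ : F} (hγ : (subspacePoly W).eval γ ≠ 0) :
    {x : F | ∃ c : Fˣ, c ∈ T ∧ ∃ v ∈ W, x = (c : F) * (γ + v)}.ncard =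
      Nat.card T * Nat.card W := by
  have hS : {x : F | ∃ c : Fˣ, c ∈ T ∧ ∃ v ∈ W, x = (c : F) * (γ + v)} =
      (fun p : Fˣ × F => (p.1 : F) * (γ + p.2)) '' ((T : Set Fˣ) ×ˢ W) := by
    ext
    simp only [Set.mem_ofPred_eq, Set.mem_image, Set.mem_prod, SetLike.mem_coe, Prod.exists]
    exact ⟨fun ⟨c, hc, v, hv, h⟩ => ⟨c, v, ⟨hc, hv⟩, h.symm⟩,
      fun ⟨c, v, ⟨hc, hv⟩, h⟩ => ⟨c, hc, v, hv, h.symm⟩⟩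
  rw [hS, (injOn_mul_add_of_eval_subspacePoly_ne_zero W hT hγ).ncard_image, Set.ncard_prod,
    ← Nat.card_coe_set_eq, ← Nat.card_coe_set_eq]
  rfl

end Subfield

theorem eq_setOf_isRoot_of_subset {R : Type*} [CommRing R] [IsDomain R] {p : R[X]} (hp : p ≠ 0)
    {S : Set R} (hS : S ⊆ {x | p.IsRoot x}) (hcard : p.natDegree ≤ S.ncard) :
    S = {x | p.IsRoot x} := by
  classical
  have hroots : {x | p.IsRoot x} = ↑p.roots.toFinset := by
    ext x
    simp [mem_roots hp]
  refine Set.eq_of_subset_of_ncard_le hS ?_ (hroots ▸ Finset.finite_toSet _)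
  rw [hroots, Set.ncard_coe_finset]
  exact (Multiset.toFinset_card_le _).trans ((card_roots' p).trans hcard)

theorem subspace_poly_roots_general
    (F : Type*) [Field F] [Fintype F]
    (ℓ : ℕ)
    (K : Subfield F)
    (T : Subgroup Fˣ) (hT : ∀ x : Fˣ, x ∈ T → (x : F) ∈ K)
    (t : ℕ) (ht : Nat.card T = t)
    (W : Submodule K F) (w : ℕ) (hW : Nat.card W = ℓ ^ w)
    (L : Polynomial F)
    (hL : L = ∏ α ∈ (Set.toFinite (W : Set F)).toFinset, (X - C α))
    (γ : F) (hγ : L.eval γ ≠ 0) :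
    {x : F | (L.eval x) ^ t = (L.eval γ) ^ t} =
      {x : F | ∃ c : Fˣ, c ∈ T ∧ ∃ v ∈ W, x = (c : F) * (γ + v)} ∧
    Set.ncard {x : F | (L.eval x) ^ t = (L.eval γ) ^ t} = t * ℓ ^ w := by
  obtain rfl : L = subspacePoly W := hL
  subst ht
  set p := subspacePoly W ^ Nat.card T - C ((subspacePoly W).eval γ ^ Nat.card T)
  have hdeg : p.natDegree = Nat.card T * Nat.card W := by
    rw [natDegree_sub_C, natDegree_pow, natDegree_subspacePoly]
  have hp : p ≠ 0 :=
    ne_zero_of_natDegree_gt (n := 0) (hdeg ▸ Nat.mul_pos Nat.card_pos Nat.card_pos)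
  have hroots :
      {x | (subspacePoly W).eval x ^ Nat.card T = (subspacePoly W).eval γ ^ Nat.card T} =
        {x | p.IsRoot x} := by
    ext
    simp [p, sub_eq_zero]
  have hSroots :
    {x : F | ∃ c : Fˣ, c ∈ T ∧ ∃ v ∈ W, x = (c : F) * (γ + v)} ⊆ {x | p.IsRoot x} := by
    rintro _ ⟨c, hc, v, hv, rfl⟩
    simp [p, sub_eq_zero, eval_subspacePoly_mul_add_pow_natCard W hT hc hv]
  have hScard := ncard_setOf_mul_add_of_eval_subspacePoly_ne_zero W hT hγ
  rw [hroots, ← eq_setOf_isRoot_of_subset hp hSroots (hdeg.trans hScard.symm).le, hScard,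
    hW]
  exact ⟨rfl, rfl⟩

/-- Lemma 4.1 of the paper. Let `F = F_{ℓ^u}`, `T ≤ F_ℓ^*` a
multiplicative subgroup of order `t`, `W ⊆ F` an `F_ℓ`-subspace of dimension
`w` (i.e. of cardinality `ℓ^w`), and `L(X) = ∏_{α∈W}(X-α)`. For every `γ` with
`L(γ) ≠ 0`, the roots in `F` of `L(X)^t - L(γ)^t` are exactly
`{c·(γ+v) : c ∈ T, v ∈ W}`, a set of exactly `t·ℓ^w` elements. -/
theorem subspace_poly_roots
    (F : Type*) [Field F] [Fintype F] [DecidableEq F]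
    (ℓ u : ℕ) (hℓ : IsPrimePow ℓ) (hF : Fintype.card F = ℓ ^ u)
    (K : Subfield F) (hK : Nat.card K = ℓ)
    (T : Subgroup Fˣ) (hT : ∀ x : Fˣ, x ∈ T → (x : F) ∈ K)
    (t : ℕ) (ht : Nat.card T = t)
    (W : Submodule K F) (w : ℕ) (hW : Nat.card W = ℓ ^ w)
    (L : Polynomial F)
    (hL : L = ∏ α ∈ (Set.toFinite (W : Set F)).toFinset, (X - C α))
    (γ : F) (hγ : L.eval γ ≠ 0) :
    {x : F | (L.eval x) ^ t = (L.eval γ) ^ t} =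
      {x : F | ∃ c : Fˣ, c ∈ T ∧ ∃ v ∈ W, x = (c : F) * (γ + v)} ∧
    Set.ncard {x : F | (L.eval x) ^ t = (L.eval γ) ^ t} = t * ℓ ^ w :=
  subspace_poly_roots_general F ℓ K T hT t ht W w hW L hL γ hγ
end

section
/- Let F_q be a finite field, a_1,…,a_n ∈ F_q pairwise distinct, and let k be an integer with 1 ≤ k and k + 2 ≤ n. Set t = 1 + ⌊(n−k)/2⌋. Then there exist a word y ∈ F_q^n and two distinct codewords c_1, c_2 ∈ RS[n,k] such that y − c_1 and y − c_2 are both t-bursts. Consequently, RS[n,k] cannot deterministically uniquely correct all burst errors of length t = 1 + ⌊(n−k)/2⌋. -/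
/-!
Take `c₁ = 0` and `c₂` the evaluation of the nodal polynomial of the first `k - 1` points, which
has degree `k - 1 < k` and vanishes exactly there. The support of `c₂` is the final segment
`[k - 1, n)`, of length `n - k + 1`; cutting it at `m = k + ⌊(n - k)/2⌋` into two pieces of length
at most `1 + ⌊(n - k)/2⌋`, the word `y` equal to `c₂` before `m` and to `0` from `m` on is at burst
distance from both codewords.
-/

open Polynomial

theorem sub_lt_of_nonzero_imp_mem_Ico {M : Type*} [Zero M] {n : ℕ} (e : Fin n → M) (s ℓ : ℕ)
    (he : ∀ i : Fin n, e i ≠ 0 → s ≤ (i : ℕ) ∧ (i : ℕ) < s + ℓ) :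
    ∀ i j : Fin n, e i ≠ 0 → e j ≠ 0 → (j : ℕ) - (i : ℕ) < ℓ := by
  intro i j hi hj
  have := he i hi
  have := he j hj
  omega

namespace Lagrange

variable {R ι : Type*} [CommRing R] [IsDomain R] [LinearOrder ι] [LocallyFiniteOrderBot ι]

theorem eval_nodal_Iio_eq_zero_iff {v : ι → R} (hv : Function.Injective v) (p i : ι) :
    (nodal (Finset.Iio p) v).eval (v i) = 0 ↔ i < p := by
  refine ⟨fun h => ?_, fun h => eval_nodal_at_node (Finset.mem_Iio.mpr h)⟩
  by_contra hip
  refine eval_nodal_not_at_node (fun j hj hij => ?_) h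
  exact hip (hv hij ▸ Finset.mem_Iio.mp hj)

theorem degree_nodal_Iio_fin {n : ℕ} (v : Fin n → R) (p : Fin n) :
    (nodal (Finset.Iio p) v).degree = (p : ℕ) := by
  rw [degree_nodal, Fin.card_Iio]

end Lagrange

/-- genus-zero instance of Lemma 5.2 of the paper. With
`t = 1 + ⌊(n-k)/2⌋`, there are a word `y` and two distinct Reed–Solomon
codewords `c₁, c₂` such that both `y - c₁` and `y - c₂` are `t`-bursts; hence
`RS[n,k]` cannot deterministically uniquely correct all bursts of length `t`. -/
theorem rs_unique_decoding_limit
    (F : Type*) [Field F] (n k : ℕ)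
    (a : Fin n → F) (ha : Function.Injective a)
    (hk : 1 ≤ k) (hkn : k + 2 ≤ n) :
    ∃ y c₁ c₂ : Fin n → F,
      (∃ f : Polynomial F, f.degree < k ∧ ∀ i, c₁ i = f.eval (a i)) ∧
      (∃ f : Polynomial F, f.degree < k ∧ ∀ i, c₂ i = f.eval (a i)) ∧
      c₁ ≠ c₂ ∧
      (∀ i j : Fin n, (y - c₁) i ≠ 0 → (y - c₁) j ≠ 0 →
        (j : ℕ) - (i : ℕ) < 1 + (n - k) / 2) ∧
      (∀ i j : Fin n, (y - c₂) i ≠ 0 → (y - c₂) j ≠ 0 →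
        (j : ℕ) - (i : ℕ) < 1 + (n - k) / 2) := by
  let p : Fin n := ⟨k - 1, by omega⟩
  let g := Lagrange.nodal (Finset.Iio p) a
  have hg : ∀ i, g.eval (a i) = 0 ↔ (i : ℕ) < k - 1 := fun i =>
    (Lagrange.eval_nodal_Iio_eq_zero_iff ha p i).trans Fin.lt_def
  let m := k + (n - k) / 2
  let c : Fin n → F := fun i => g.eval (a i)
  let y : Fin n → F := fun i => if (i : ℕ) < m then c i else 0
  have hg_deg : g.degree < k := by
    rw [Lagrange.degree_nodal_Iio_fin]
    exact_mod_cast (by omega : k - 1 < k)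
  refine ⟨y, 0, c, ⟨0, by simp, fun _ => eval_zero.symm⟩,
    ⟨g, hg_deg, fun _ => rfl⟩, fun h => ?_, ?_, ?_⟩
  · exact absurd ((hg p).mp (congrFun h p).symm) (lt_irrefl _)
  · refine sub_lt_of_nonzero_imp_mem_Ico _ (k - 1) _ fun i hi => ?_
    by_cases him : (i : ℕ) < m
    · have : ¬ (i : ℕ) < k - 1 := fun h => hi (by simp [y, c, him, (hg i).mpr h])
      omega
    · simp [y, him] at hi
  · refine sub_lt_of_nonzero_imp_mem_Ico _ m _ fun i hi => ?_
    by_cases him : (i : ℕ) < m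
    · simp [y, him] at hi
    · omega
end

section
/- Let F_q be a finite field, let α ∈ F_q^* have multiplicative order n, let ξ ∈ F_q^*, and set a_j = ξα^{j−1} for j = 1,…,n (these are pairwise distinct). Let 1 ≤ k ≤ n − 2 and d = n − k. Suppose y = c + e ∈ F_q^n where c ∈ RS[n,k] (with evaluation points a_1,…,a_n) and e ∈ F_q^n satisfies e_j = 0 for all j ∉ {i, i+1, …, i+ℓ−1}, for some integers i, ℓ with 1 ≤ i, i + ℓ − 1 ≤ n and 1 ≤ ℓ ≤ d − 1. Define δ_j = ∏_{j'≠j}(a_j − a_{j'})^{−1}, the syndromes S_v = Σ_{j=1}^n y_j δ_j a_j^v for 0 ≤ v ≤ d−1, the polynomial Λ(X) = ∏_{j=1}^{d−1}(1 − a_j X) = Σ_{v=0}^{d−1} Λ_v X^v, and Γ(X) = Σ_{v=0}^{d−1} S_{d−1−v} Λ_v X^v. Then Γ(α^{i−1−s}) = 0 for every s = 0, 1, …, d − ℓ − 1; that is, Γ has the d − ℓ consecutive roots α^{i−1}, α^{i−2}, …, α^{i−d+ℓ}. -/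
/-!
Write `a_j = ξ α^j`, `d = n - k`. The weights `δ_j` are the Lagrange nodal weights of the points
`a_j`, so `∑_j δ_j P(a_j)` is the coefficient of `X^(n-1)` in any `P` of degree `< n`; applied to
`P = f X^v` with `deg f < k`, `v < d`, this kills the codeword part of every syndrome `S_v`. Hence
`Γ(β) = ∑_j e_j δ_j a_j^(d-1) Λ(β / a_j)`, and for `β = α^(i-1-s)` and `j` in the burst window,
`β / a_j` is the inverse of `a_w` with `w = j + 1 + s - i < d - 1`, a root of `Λ`.
-/

open Polynomial Finset Lagrange

section Syndrome

variable {F ι : Type*} [Field F] [DecidableEq ι] {s : Finset ι} {x : ι → F}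

theorem sum_eval_mul_nodalWeight_eq_zero (hx : Set.InjOn x s) {P : F[X]}
    (hP : P.degree < ↑(#s - 1)) : ∑ i ∈ s, P.eval (x i) * nodalWeight s x i = 0 := by
  have hPs : P.degree < #s := hP.trans_le (by exact_mod_cast Nat.sub_le _ _)
  rw [← coeff_eq_zero_of_degree_lt hP, coeff_eq_sum hx hPs]
  simp only [nodalWeight, prod_inv_distrib, div_eq_mul_inv]

theorem sum_eval_mul_nodalWeight_mul_pow_eq_zero (hx : Set.InjOn x s) {f : F[X]} {k m : ℕ}
    (hf : f.degree < k) (hm : k + m < #s) :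
    ∑ i ∈ s, f.eval (x i) * nodalWeight s x i * x i ^ m = 0 := by
  have hdeg : (f * X ^ m).degree < ↑(#s - 1) := by
    rw [degree_mul, degree_X_pow]
    calc f.degree + m < k + m := WithBot.add_lt_add_right (WithBot.natCast_ne_bot m) hf
      _ ≤ ↑(#s - 1) := by exact_mod_cast (by omega : k + m ≤ #s - 1)
  simpa only [eval_mul, eval_pow, eval_X, mul_right_comm] using
    sum_eval_mul_nodalWeight_eq_zero hx hdeg

end Syndrome

section KeyEquation

variable {F : Type*} [Field F] {Λ : F[X]} {d : ℕ}

theorem sum_range_pow_sub_mul_coeff_mul_pow (hΛ : Λ.natDegree < d) {x : F} (hx : x ≠ 0) (z : F) :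
    ∑ v ∈ range d, x ^ (d - 1 - v) * Λ.coeff v * z ^ v = x ^ (d - 1) * Λ.eval (z / x) := by
  rw [eval_eq_sum_range' hΛ, mul_sum]
  refine sum_congr rfl fun v hv => ?_
  have hvd : v ≤ d - 1 := Nat.le_sub_one_of_lt (mem_range.mp hv)
  rw [div_pow, ← pow_sub_mul_pow x hvd]
  field_simp

theorem sum_range_sum_mul_pow_sub_mul_coeff_mul_pow {ι : Type*} [Fintype ι] (hΛ : Λ.natDegree < d)
    (w : ι → F) {x : ι → F} (hx : ∀ j, x j ≠ 0) (z : F) :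
    ∑ v ∈ range d, (∑ j, w j * x j ^ (d - 1 - v)) * Λ.coeff v * z ^ v
      = ∑ j, w j * x j ^ (d - 1) * Λ.eval (z / x j) := by
  simp only [mul_assoc, ← sum_range_pow_sub_mul_coeff_mul_pow hΛ (hx _), sum_mul, mul_sum]
  exact sum_comm

end KeyEquation

theorem natDegree_prod_one_sub_C_mul_X_le {R ι : Type*} [CommRing R] (s : Finset ι) (b : ι → R) :
    (∏ v ∈ s, (1 - C (b v) * X)).natDegree ≤ #s :=
  calc (∏ v ∈ s, (1 - C (b v) * X)).natDegree
      ≤ ∑ v ∈ s, (1 - C (b v) * X).natDegree := natDegree_prod_le _ _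
    _ ≤ #s • 1 := sum_le_card_nsmul _ _ _ fun v _ => by compute_degree
    _ = #s := by rw [smul_eq_mul, mul_one]

theorem eval_prod_one_sub_C_mul_pow_mul_X_eq_zero {F : Type*} [Field F] (ξ α : Fˣ)
    {m w j : ℕ} {t : ℤ} (hw : w < m) (hwt : (w : ℤ) + t = j) :
    (∏ v ∈ range m, (1 - C ((ξ : F) * (α : F) ^ v) * X)).eval
      (((α ^ t : Fˣ) : F) / ((ξ * α ^ j : Fˣ) : F)) = 0 := by
  have hshift : ξ * α ^ w * α ^ t = ξ * α ^ j := by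
    rw [mul_assoc, ← zpow_natCast, ← zpow_natCast α j, ← zpow_add, hwt]
  rw [eval_prod]
  refine prod_eq_zero (mem_range.mpr hw) ?_
  rw [eval_sub, eval_one, eval_mul, eval_C, eval_X, sub_eq_zero, mul_div_assoc', eq_comm,
    div_eq_one_iff_eq (Units.ne_zero _), ← hshift]
  push_cast
  rfl

theorem injective_mul_pow_fin {G : Type*} [Group G] (ξ α : G) {n : ℕ} (hα : orderOf α = n) :
    Function.Injective fun j : Fin n => ξ * α ^ (j : ℕ) := fun j j' hjj' =>
  Fin.ext <| pow_injOn_Iio_orderOf (by simp [hα]) (by simp [hα]) (mul_left_cancel hjj')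

theorem wu_gamma_roots_general
    (F : Type*) [Field F]
    (n : ℕ) (α ξ : Fˣ) (hα : orderOf α = n)
    (k : ℕ)
    (d : ℕ) (hd : d = n - k)
    (a : Fin n → F) (haj : ∀ j : Fin n, a j = (ξ : F) * (α : F) ^ (j : ℕ))
    (y c e : Fin n → F) (hy : y = c + e)
    (hc : ∃ f : Polynomial F, f.degree < k ∧ ∀ j, c j = f.eval (a j))
    (i ℓ : ℕ)
    (he : ∀ j : Fin n, ((j : ℕ) + 1 < i ∨ i + ℓ ≤ (j : ℕ) + 1) → e j = 0)
    (δ : Fin n → F)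
    (hδ : ∀ j, δ j = ∏ j' ∈ Finset.univ.erase j, (a j - a j')⁻¹)
    (S : ℕ → F) (hS : ∀ v, S v = ∑ j, y j * δ j * (a j) ^ v)
    (Λ : Polynomial F)
    (hΛ : Λ = ∏ v ∈ Finset.range (d - 1), (1 - C ((ξ : F) * (α : F) ^ v) * X))
    (Γ : Polynomial F)
    (hΓ : Γ = ∑ v ∈ Finset.range d, C (S (d - 1 - v) * Λ.coeff v) * X ^ v) :
    ∀ s : ℕ, s + ℓ < d →
      Γ.eval (((α ^ ((i : ℤ) - 1 - (s : ℤ)) : Fˣ) : F)) = 0 := by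
  intro s hs
  set β : F := ((α ^ ((i : ℤ) - 1 - (s : ℤ)) : Fˣ) : F)
  have ha (j : Fin n) : a j = ((ξ * α ^ (j : ℕ) : Fˣ) : F) := by simpa using haj j
  have hinj : Set.InjOn a (univ : Finset (Fin n)) := fun j _ j' _ hjj' =>
    injective_mul_pow_fin ξ α hα (Units.val_injective (by simpa only [ha] using hjj'))
  have hδw : δ = nodalWeight univ a := funext hδ
  obtain ⟨f, hf, hcf⟩ := hc
  have hSe : ∀ v < d, S v = ∑ j, e j * δ j * a j ^ v := fun v hv => by
    have hcv : ∑ j, c j * δ j * a j ^ v = 0 := by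
      simpa only [hcf, hδw] using sum_eval_mul_nodalWeight_mul_pow_eq_zero hinj hf (m := v)
        (by rw [card_univ, Fintype.card_fin]; omega)
    simp only [hS, hy, Pi.add_apply, add_mul, sum_add_distrib, hcv, zero_add]
  have hroot (j : Fin n) (hej : e j ≠ 0) : Λ.eval (β / a j) = 0 := by
    have hwin : i ≤ j + 1 ∧ j + 1 < i + ℓ := by have := mt (he j) hej; omega
    rw [hΛ, ha]
    exact eval_prod_one_sub_C_mul_pow_mul_X_eq_zero ξ α (w := j + 1 + s - i) (by omega) (by omega)
  have hΛd : Λ.natDegree < d :=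
    hΛ ▸ (natDegree_prod_one_sub_C_mul_X_le _ _).trans_lt (by rw [card_range]; omega)
  calc Γ.eval β
      = ∑ v ∈ range d, (∑ j, e j * δ j * a j ^ (d - 1 - v)) * Λ.coeff v * β ^ v := by
        simp only [hΓ, eval_finsetSum, eval_mul, eval_C, eval_pow, eval_X]
        exact sum_congr rfl fun v hv => by rw [hSe _ (by omega)]
    _ = ∑ j, e j * δ j * a j ^ (d - 1) * Λ.eval (β / a j) :=
        sum_range_sum_mul_pow_sub_mul_coeff_mul_pow hΛd _ (fun j => ha j ▸ Units.ne_zero _) β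
    _ = 0 := sum_eq_zero fun j _ => by by_cases hej : e j = 0 <;> simp [hej, hroot]

/-- Lemma A.1 of the paper, underlying Wu's burst-interval
identification. For the Reed–Solomon code on the evaluation points
`a_j = ξ·α^{j-1}` (with `α` of order `n`), if `y = c + e` with `c` a codeword
and `e` supported in the window `{i, …, i+ℓ-1}` (`1 ≤ ℓ ≤ d-1`, `d = n-k`),
then the polynomial `Γ(X) = Σ_v S_{d-1-v} Λ_v X^v` built from the syndromes
`S_v` and the reciprocal error locator `Λ(X) = ∏_{j=1}^{d-1}(1 - a_j X)` has
the `d - ℓ` consecutive roots `α^{i-1}, α^{i-2}, …, α^{i-d+ℓ}`. -/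
theorem wu_gamma_roots
    (F : Type*) [Field F] [DecidableEq F]
    (n : ℕ) (α ξ : Fˣ) (hα : orderOf α = n)
    (k : ℕ) (hk : 1 ≤ k) (hkn : k + 2 ≤ n)
    (d : ℕ) (hd : d = n - k)
    (a : Fin n → F) (haj : ∀ j : Fin n, a j = (ξ : F) * (α : F) ^ (j : ℕ))
    (y c e : Fin n → F) (hy : y = c + e)
    (hc : ∃ f : Polynomial F, f.degree < k ∧ ∀ j, c j = f.eval (a j))
    (i ℓ : ℕ) (hi : 1 ≤ i) (hiℓ : i + ℓ - 1 ≤ n) (hℓ1 : 1 ≤ ℓ) (hℓd : ℓ ≤ d - 1)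
    (he : ∀ j : Fin n, ((j : ℕ) + 1 < i ∨ i + ℓ ≤ (j : ℕ) + 1) → e j = 0)
    (δ : Fin n → F)
    (hδ : ∀ j, δ j = ∏ j' ∈ Finset.univ.erase j, (a j - a j')⁻¹)
    (S : ℕ → F) (hS : ∀ v, S v = ∑ j, y j * δ j * (a j) ^ v)
    (Λ : Polynomial F)
    (hΛ : Λ = ∏ v ∈ Finset.range (d - 1), (1 - C ((ξ : F) * (α : F) ^ v) * X))
    (Γ : Polynomial F)
    (hΓ : Γ = ∑ v ∈ Finset.range d, C (S (d - 1 - v) * Λ.coeff v) * X ^ v) :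
    ∀ s : ℕ, s + ℓ < d →
      Γ.eval (((α ^ ((i : ℤ) - 1 - (s : ℤ)) : Fˣ) : F)) = 0 :=
  wu_gamma_roots_general F n α ξ hα k d hd a haj y c e hy hc i ℓ he δ hδ S hS Λ hΛ Γ hΓ
end

section
/- Let κ ≥ 1 and λ ≥ 0 be integers. Define I_1(λ) = {(i_1,i_2,i_3) ∈ ℤ^3 : i_1κ² + i_2κ + i_3(κ+1) ≤ λ, i_2κ + i_3(κ+1) ≤ i_1κ, 0 ≤ i_1, 0 ≤ i_2 ≤ κ−1, 0 ≤ i_3 ≤ κ−1}, and let I_2(λ) be the set of triples (i_1, i_2, i_3) ∈ ℤ^3 satisfying: i_1κ² + i_2κ + i_3(κ+1) ≤ λ, i_3(κ+1) ≤ i_2κ + i_1κ, 1 ≤ i_2 ≤ κ, i_1 ≥ κ·i_2, 0 ≤ i_3 ≤ κ−1, and (i_1−1, κ−i_2, i_3) ∉ I_1(λ). Then every (i_1,i_2,i_3) ∈ I_2(λ) satisfies i_2 = 1, 1 ≤ i_3 ≤ κ−1, and κ ≤ i_1 ≤ i_3 + κ; consequently |I_2(λ)| ≤ (κ² + κ −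 2)/2. -/
/-!
Write `x = (a, b, c)`. Of the conditions for the shifted triple `(a - 1, κ - b, c)` to lie in
`I₁(λ)`, all but one follow from `x ∈ I₂(λ)`, so the failing one is
`(κ - b) κ + c (κ + 1) > (a - 1) κ`. Together with `a ≥ κ b` and `c ≤ κ - 1` this forces
`b = 1`, then `c ≥ 1` and `a ≤ c + κ`. Hence `I₂(λ)` lies in a triangle of
`∑_{c=1}^{κ-1} (c + 1) = (κ² + κ - 2)/2` points.
-/

/-- The index set `I₁(λ)` of the paper's Lemma 5.8 (Garcia–Stichtenoth tower,
third function field). -/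
def gsIndexSetOne (κ : ℕ) (lam : ℕ) : Set (ℤ × ℤ × ℤ) :=
  {x | x.1 * (κ : ℤ) ^ 2 + x.2.1 * (κ : ℤ) + x.2.2 * ((κ : ℤ) + 1) ≤ (lam : ℤ) ∧
       x.2.1 * (κ : ℤ) + x.2.2 * ((κ : ℤ) + 1) ≤ x.1 * (κ : ℤ) ∧
       0 ≤ x.1 ∧
       0 ≤ x.2.1 ∧ x.2.1 ≤ (κ : ℤ) - 1 ∧
       0 ≤ x.2.2 ∧ x.2.2 ≤ (κ : ℤ) - 1}

/-- The index set `I₂(λ)` of the paper's Lemma 5.8. -/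
def gsIndexSetTwo (κ : ℕ) (lam : ℕ) : Set (ℤ × ℤ × ℤ) :=
  {x | x.1 * (κ : ℤ) ^ 2 + x.2.1 * (κ : ℤ) + x.2.2 * ((κ : ℤ) + 1) ≤ (lam : ℤ) ∧
       x.2.2 * ((κ : ℤ) + 1) ≤ x.2.1 * (κ : ℤ) + x.1 * (κ : ℤ) ∧
       1 ≤ x.2.1 ∧ x.2.1 ≤ (κ : ℤ) ∧
       (κ : ℤ) * x.2.1 ≤ x.1 ∧
       0 ≤ x.2.2 ∧ x.2.2 ≤ (κ : ℤ) - 1 ∧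
       (x.1 - 1, (κ : ℤ) - x.2.1, x.2.2) ∉ gsIndexSetOne κ lam}

theorem two_mul_sum_range_add_two (n : ℕ) :
    2 * ∑ i ∈ Finset.range n, (i + 2) = n * (n + 3) := by
  induction n with
  | zero => rfl
  | succ n ih => rw [Finset.sum_range_succ, mul_add, ih]; ring

namespace GsIndexSet

variable {κ lam : ℕ} {a b c : ℤ}

theorem sub_one_mul_lt_of_mem_two (hx : (a, b, c) ∈ gsIndexSetTwo κ lam) :
    (a - 1) * κ < (κ - b) * κ + c * (κ + 1) := by
  obtain ⟨hlam, -, hb₁, hbκ, hab, hc₀, hcκ, hnot⟩ := hx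
  by_contra! hle
  have hκ : (0 : ℤ) ≤ κ := by positivity
  exact hnot ⟨by nlinarith, hle, by nlinarith, by linarith, by linarith, hc₀, hcκ⟩

theorem snd_eq_one_of_mem_two (hx : (a, b, c) ∈ gsIndexSetTwo κ lam) : b = 1 := by
  have hlt := sub_one_mul_lt_of_mem_two hx
  obtain ⟨-, -, hb₁, -, hab, -, hcκ, -⟩ := hx
  dsimp only at hb₁ hab hcκ
  have hκ : (0 : ℤ) ≤ κ := by positivity
  suffices b < 2 by omega
  by_contra! hb
  have hκ₁ : (0 : ℤ) ≤ κ + 1 := by linarith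
  nlinarith [mul_nonneg (sub_nonneg.2 hab) hκ, mul_nonneg (sub_nonneg.2 hcκ) hκ₁,
    mul_nonneg (by linarith : (0 : ℤ) ≤ b - 2) (mul_nonneg hκ hκ₁)]

theorem bounds_of_mem_two (hx : (a, b, c) ∈ gsIndexSetTwo κ lam) :
    b = 1 ∧ 1 ≤ c ∧ c ≤ (κ : ℤ) - 1 ∧ (κ : ℤ) ≤ a ∧ a ≤ c + κ := by
  have hlt := sub_one_mul_lt_of_mem_two hx
  obtain rfl := snd_eq_one_of_mem_two hx
  obtain ⟨-, -, -, -, hab, -, hcκ, -⟩ := hx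
  dsimp only at hab hcκ
  exact ⟨rfl, by nlinarith, hcκ, by linarith, by nlinarith⟩

def triangle (κ : ℕ) : Finset (ℤ × ℤ × ℤ) :=
  (Finset.range (κ - 1)).biUnion fun i =>
    (Finset.range (i + 2)).image fun j => (((κ + j : ℕ) : ℤ), 1, ((i + 1 : ℕ) : ℤ))

theorem card_triangle_le (κ : ℕ) : (triangle κ).card ≤ (κ ^ 2 + κ - 2) / 2 := by
  have hcard : (triangle κ).card ≤ ∑ i ∈ Finset.range (κ - 1), (i + 2) :=
    Finset.card_biUnion_le.trans <| Finset.sum_le_sum fun i _ =>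
      Finset.card_image_le.trans (Finset.card_range _).le
  have hsum := two_mul_sum_range_add_two (κ - 1)
  rcases κ with _ | n
  · simp [triangle]
  · have : (n + 1) ^ 2 + (n + 1) - 2 = n * (n + 3) := by
      rw [Nat.sub_eq_of_eq_add]; ring
    simp only [Nat.add_sub_cancel] at hcard hsum
    omega

theorem subset_triangle (κ lam : ℕ) : gsIndexSetTwo κ lam ⊆ triangle κ := by
  rintro ⟨a, b, c⟩ hx
  obtain ⟨rfl, hc₁, hcκ, hκa, hac⟩ := bounds_of_mem_two hx
  simp only [triangle, Finset.coe_biUnion, Finset.coe_image, Set.mem_iUnion, Set.mem_image,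
    Finset.mem_coe, Finset.mem_range, Prod.mk.injEq]
  exact ⟨(c - 1).toNat, by omega, (a - κ).toNat, by omega, by omega, trivial, by omega⟩

end GsIndexSet

theorem gs_index_set_two_bound_general (κ : ℕ) (lam : ℕ) :
    (∀ x ∈ gsIndexSetTwo κ lam,
      x.2.1 = 1 ∧ 1 ≤ x.2.2 ∧ x.2.2 ≤ (κ : ℤ) - 1 ∧
      (κ : ℤ) ≤ x.1 ∧ x.1 ≤ x.2.2 + (κ : ℤ)) ∧
    (gsIndexSetTwo κ lam).ncard ≤ (κ ^ 2 + κ - 2) / 2 := by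
  refine ⟨fun ⟨a, b, c⟩ hx => GsIndexSet.bounds_of_mem_two hx, ?_⟩
  calc (gsIndexSetTwo κ lam).ncard
      ≤ (GsIndexSet.triangle κ : Set (ℤ × ℤ × ℤ)).ncard :=
        Set.ncard_le_ncard (GsIndexSet.subset_triangle κ lam) (Finset.finite_toSet _)
    _ = (GsIndexSet.triangle κ).card := Set.ncard_coe_finset _
    _ ≤ (κ ^ 2 + κ - 2) / 2 := GsIndexSet.card_triangle_le κ

/-- combinatorial content of Lemma 5.8 of the paper. Every
triple `(i₁,i₂,i₃) ∈ I₂(λ)` satisfies `i₂ = 1`, `1 ≤ i₃ ≤ κ-1` and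
`κ ≤ i₁ ≤ i₃ + κ`; consequently `|I₂(λ)| ≤ (κ² + κ - 2)/2`. -/
theorem gs_index_set_two_bound (κ : ℕ) (hκ : 1 ≤ κ) (lam : ℕ) :
    (∀ x ∈ gsIndexSetTwo κ lam,
      x.2.1 = 1 ∧ 1 ≤ x.2.2 ∧ x.2.2 ≤ (κ : ℤ) - 1 ∧
      (κ : ℤ) ≤ x.1 ∧ x.1 ≤ x.2.2 + (κ : ℤ)) ∧
    (gsIndexSetTwo κ lam).ncard ≤ (κ ^ 2 + κ - 2) / 2 :=
  gs_index_set_two_bound_general κ lam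
end
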